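/- Let δ ∈ (0,1), c > 1, and let I ⊂ ℤ^d be a finite frequency set with T := |I| ≥ 2 and expansion N_I ≤ c(T−1). Set λ := c(T−1), s := ⌈(c/(c−1))² (ln T − ln δ)/2⌉, and let M be the smallest prime larger than λ (so λ < M ≤ 2λ by Bertrand's postulate). If z_1,…,z_s are independent random vectors, each uniformly distributed on {0,…,M−1}^d ∩ ℤ^d, then with probability at least 1 − δ the multiple rank-1 lattice Λ(z_1,M,…,z_s,M) is reconstructing for I, and deterministically its number of sampling nodes satisfies 1 + s(M−1) ≤ s · 2c(T−1) < C_{c,δ} · T · ln T, where C_{c,δ} := 2c((c/(c−1))² (1 − log₂ δ)/2 + log₂ e). -/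

import Mathlib

/-!
Fix `k ∈ I`. The expansion of `I` is smaller than the prime `M`, so every difference `l - k`,
`l ≠ k`, is nonzero modulo `M` and the hyperplane `(l - k) ⬝ z = 0` of `𝔽_M^d` holds a fraction
`1/M` of all `z`. A uniform `z_ℓ` therefore makes `k` collide with another frequency with
probability at most `(T - 1)/M < 1/c`, and the `s` independent lattices all fail for some `k`
with probability at most `T c^(-s) ≤ δ`; the last step is `(c/(c-1))² log c ≥ 2`, which follows
from `log c ≥ 2(c-1)/(c+1)`. If every `k` has a collision-free lattice `ℓ`, pairing block `ℓ`
with the conjugate character of `k` singles out column `k`, so the Fourier matrix has a left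
inverse. The bounds on the number of nodes come from Bertrand's postulate, `M ≤ 2c(T-1)`.
-/

open scoped BigOperators

/-- The Fourier matrix of the multiple rank-1 lattice `Λ(z_1,M_1,…,z_s,M_s)` with respect to
the frequency set `I`: the row indexed by `(ℓ, j)` and the column indexed by `k ∈ I` carry the
entry `e^{2πi (j/M_ℓ) k·z_ℓ}`. (The rows `j = 0` of the blocks `ℓ ≥ 2` are all-ones rows and
coincide with the row `(1, 0)`, so this matrix has the same rows — up to repetition — and in
particular the same column rank as the matrix obtained by stacking the block
`j = 0,…,M_1-1` and the blocks `j = 1,…,M_ℓ-1`, `ℓ ≥ 2`.) -/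
noncomputable def multiFourier {d s : ℕ} (z : Fin s → Fin d → ℤ) (M : Fin s → ℕ)
    (I : Finset (Fin d → ℤ)) :
    Matrix ((ℓ : Fin s) × Fin (M ℓ)) {k // k ∈ I} ℂ :=
  fun r k => Complex.exp (2 * Real.pi * Complex.I * (((r.2 : ℕ) : ℂ) / (M r.1 : ℂ)) *
    ((∑ i, k.1 i * z r.1 i : ℤ) : ℂ))

open Finset Matrix Real

lemma two_mul_sub_one_div_add_one_le_log {x : ℝ} (hx : 1 < x) :
    2 * (x - 1) / (x + 1) ≤ log x := by
  have ha : 0 < (x - 1)⁻¹ := inv_pos.mpr (by linarith)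
  have hsum := hasSum_log_one_add_inv ha
  rw [inv_inv, add_sub_cancel] at hsum
  refine le_of_eq_of_le ?_ (le_hasSum hsum 0 fun k _ => by positivity)
  have : x - 1 ≠ 0 := by linarith
  have h : 2 * (x - 1)⁻¹ + 1 = (x + 1) / (x - 1) := by field_simp; ring
  simp only [h, CharP.cast_eq_zero, mul_zero, zero_add, pow_one, div_one, mul_one, one_div_div]
  ring

lemma two_le_sq_div_sub_one_mul_log {c : ℝ} (hc : 1 < c) : 2 ≤ (c / (c - 1)) ^ 2 * log c := by
  have hlog := two_mul_sub_one_div_add_one_le_log hc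
  rw [div_le_iff₀ (by linarith)] at hlog
  rw [div_pow, div_mul_eq_mul_div, le_div_iff₀ (by nlinarith)]
  nlinarith [mul_le_mul_of_nonneg_left hlog (by positivity : (0:ℝ) ≤ c - 1)]

lemma le_mul_pow_of_log_sub_log_le {c δ t : ℝ} {s : ℕ} (hc : 1 < c) (hδ : 0 < δ) (ht : 0 < t)
    (hs : (c / (c - 1)) ^ 2 * (log t - log δ) / 2 ≤ s) : t ≤ δ * c ^ s := by
  have hlogc : 0 < log c := log_pos hc
  have key : log t - log δ ≤ s * log c := by
    rcases le_or_gt (log t - log δ) 0 with h | h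
    · nlinarith [s.cast_nonneg (α := ℝ)]
    · nlinarith [two_le_sq_div_sub_one_mul_log hc, mul_le_mul_of_nonneg_right hs hlogc.le]
  rw [← log_le_log_iff ht (by positivity), log_mul hδ.ne' (by positivity), log_pow]
  linarith

lemma mul_div_pow_le_of_log_sub_log_le {c δ t m : ℝ} {s : ℕ} (hc : 1 < c) (hδ : 0 < δ)
    (ht : 1 ≤ t) (hm : c * (t - 1) < m) (hs : (c / (c - 1)) ^ 2 * (log t - log δ) / 2 ≤ s) :
    t * ((t - 1) / m) ^ s ≤ δ := by
  have hm0 : 0 < m := by nlinarith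
  have hratio : (t - 1) / m ≤ c⁻¹ := by
    rw [div_le_iff₀ hm0, inv_mul_eq_div, le_div_iff₀ (by linarith)]
    linarith
  calc t * ((t - 1) / m) ^ s ≤ δ * c ^ s * c⁻¹ ^ s :=
        mul_le_mul (le_mul_pow_of_log_sub_log_le hc hδ (by linarith) hs)
          (pow_le_pow_left₀ (div_nonneg (by linarith) hm0.le) hratio s) (by positivity)
          (by positivity)
    _ = δ := by rw [mul_assoc, ← mul_pow, mul_inv_cancel₀ (by linarith), one_pow, mul_one]

lemma le_two_mul_of_forall_prime_lt_le {x : ℝ} (hx : 1 ≤ x) {M : ℕ}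
    (hM : ∀ p : ℕ, p.Prime → x < p → M ≤ p) : (M : ℝ) ≤ 2 * x := by
  obtain ⟨p, hp, hlt, hle⟩ :=
    Nat.exists_prime_lt_and_le_two_mul ⌊x⌋₊ (Nat.floor_pos.mpr hx).ne'
  have hxp : x < p := (Nat.lt_floor_add_one x).trans_le (by exact_mod_cast hlt)
  calc (M : ℝ) ≤ p := by exact_mod_cast hM p hp hxp
    _ ≤ 2 * ⌊x⌋₊ := by exact_mod_cast hle
    _ ≤ 2 * x := by gcongr; exact Nat.floor_le (by linarith)

lemma mul_two_mul_sub_one_lt_mul_log {c δ t σ : ℝ} (hc : 1 < c) (hδ0 : 0 < δ) (hδ1 : δ ≤ 1)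
    (ht : 2 ≤ t) (hσ : σ < (c / (c - 1)) ^ 2 * (log t - log δ) / 2 + 1) :
    σ * (2 * c * (t - 1)) <
      2 * c * ((c / (c - 1)) ^ 2 * (1 - logb 2 δ) / 2 + logb 2 (exp 1)) * t * log t := by
  set Q := (c / (c - 1)) ^ 2
  have hQ : 0 < Q := by positivity
  have hg : 0 < log 2 := log_pos one_lt_two
  have hgL : log 2 ≤ log t := log_le_log two_pos ht
  have hD : log δ ≤ 0 := log_nonpos hδ0.le hδ1
  have key : (Q * (log t - log δ) / 2 + 1) * (t - 1) * log 2 ≤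
      (Q * (log 2 - log δ) / 2 + 1) * t * log t := by
    have h1 : (t - 1) * log 2 ≤ t * log t := by nlinarith
    nlinarith [mul_le_mul_of_nonneg_left h1 (mul_nonneg hQ.le (neg_nonneg.mpr hD)),
      mul_le_mul_of_nonneg_left (show t - 1 ≤ t by linarith)
        (mul_nonneg (mul_nonneg hQ.le hg.le) (hg.le.trans hgL))]
  have hlogb : (Q * (1 - logb 2 δ) / 2 + logb 2 (exp 1)) * log 2 =
      Q * (log 2 - log δ) / 2 + 1 := by
    rw [logb, logb, log_exp]
    field_simp
  have : σ * (t - 1) < (Q * (1 - logb 2 δ) / 2 + logb 2 (exp 1)) * t * log t := by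
    rw [← mul_lt_mul_iff_of_pos_right hg]
    calc σ * (t - 1) * log 2 < (Q * (log t - log δ) / 2 + 1) * (t - 1) * log 2 := by
          gcongr; linarith
      _ ≤ _ := key
      _ = _ := by rw [← hlogb]; ring
  nlinarith

lemma Matrix.rank_eq_card_of_mul_eq_one {K m n : Type*} [Field K] [Fintype m] [Fintype n]
    [DecidableEq n] {A : Matrix m n K} {B : Matrix n m K} (h : B * A = 1) :
    A.rank = Fintype.card n :=
  le_antisymm A.rank_le_card_width (by simpa [h] using rank_mul_le_right B A)

lemma card_filter_exists_forall_mem_le {α β σ : Type*} [Fintype σ] [DecidableEq σ] [Fintype β]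
    [DecidableEq β] (I : Finset α) (B : α → Finset β) :
    #{z : σ → β | ∃ k ∈ I, ∀ ℓ, z ℓ ∈ B k} ≤ ∑ k ∈ I, #(B k) ^ Fintype.card σ := by
  calc #{z : σ → β | ∃ k ∈ I, ∀ ℓ, z ℓ ∈ B k}
      ≤ #(I.biUnion fun k => Fintype.piFinset fun _ : σ => B k) :=
        card_le_card fun z hz => by simpa [Fintype.mem_piFinset] using hz
    _ ≤ ∑ k ∈ I, #(B k) ^ Fintype.card σ := by
        refine card_biUnion_le.trans_eq (sum_congr rfl fun k _ => ?_)
        simp [Fintype.card_piFinset]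

def IsolatesFrequencies {ι σ K : Type*} [Fintype ι] [CommRing K] (I : Finset (ι → ℤ))
    (z : σ → ι → K) : Prop :=
  ∀ k ∈ I, ∃ ℓ, ∀ l ∈ I, l ≠ k → (Int.cast ∘ l) ⬝ᵥ z ℓ ≠ (Int.cast ∘ k) ⬝ᵥ z ℓ

section Counting

variable {K ι σ : Type*} [Field K] [Fintype K] [DecidableEq K] [Fintype ι] [DecidableEq ι]

lemma card_filter_dotProduct_eq_zero_mul {a : ι → K} (ha : a ≠ 0) :
    #{v : ι → K | a ⬝ᵥ v = 0} * Fintype.card K = Fintype.card K ^ Fintype.card ι := by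
  set f := dotProductEquiv K ι a
  have hf : f ≠ 0 := (LinearEquiv.map_ne_zero_iff _).mpr ha
  have hker : #{v : ι → K | a ⬝ᵥ v = 0} = Nat.card (LinearMap.ker f) := by
    rw [← Fintype.card_subtype, ← Nat.card_eq_fintype_card]
    exact Nat.card_congr (Equiv.subtypeEquivRight fun v => by simp [f])
  rw [hker, Module.natCard_eq_pow_finrank (K := K), Nat.card_eq_fintype_card, ← pow_succ,
    Module.Dual.finrank_ker_add_one_of_ne_zero hf, Module.finrank_fintype_fun_eq_card]

lemma card_filter_exists_dotProduct_eq_zero_mul_le {S : Finset (ι → K)} (hS : 0 ∉ S) :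
    #{v : ι → K | ∃ a ∈ S, a ⬝ᵥ v = 0} * Fintype.card K ≤
      #S * Fintype.card K ^ Fintype.card ι := by
  calc #{v : ι → K | ∃ a ∈ S, a ⬝ᵥ v = 0} * Fintype.card K
      ≤ (∑ a ∈ S, #{v : ι → K | a ⬝ᵥ v = 0}) * Fintype.card K := by
        gcongr
        refine (card_le_card fun v hv => ?_).trans card_biUnion_le
        simpa using hv
    _ = #S * Fintype.card K ^ Fintype.card ι := by
        rw [sum_mul, sum_const_nat fun a ha =>
          card_filter_dotProduct_eq_zero_mul (ne_of_mem_of_not_mem ha hS)]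

variable [Fintype σ] [DecidableEq σ]

lemma card_not_isolatesFrequencies_mul_le {I : Finset (ι → ℤ)}
    (hI : Set.InjOn (fun k : ι → ℤ => (Int.cast ∘ k : ι → K)) I) :
    Nat.card {z : σ → ι → K // ¬ IsolatesFrequencies I z} * Fintype.card K ^ Fintype.card σ ≤
      #I * ((#I - 1) * Fintype.card K ^ Fintype.card ι) ^ Fintype.card σ := by
  set S : (ι → ℤ) → Finset (ι → K) := fun k =>
    (I.erase k).image fun l => Int.cast ∘ l - Int.cast ∘ k
  set B : (ι → ℤ) → Finset (ι → K) := fun k => {v | ∃ a ∈ S k, a ⬝ᵥ v = 0}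
  have hB : ∀ k ∈ I, #(B k) * Fintype.card K ≤ (#I - 1) * Fintype.card K ^ Fintype.card ι := by
    intro k hk
    have h0 : 0 ∉ S k := by
      simp only [S, mem_image, mem_erase, not_exists, not_and, sub_eq_zero]
      rintro l ⟨hlk, hl⟩ hkl
      exact hlk (hI hl hk hkl)
    refine (card_filter_exists_dotProduct_eq_zero_mul_le h0).trans ?_
    gcongr
    exact card_image_le.trans (card_erase_of_mem hk).le
  have hbad : ∀ z : σ → ι → K, ¬ IsolatesFrequencies I z → ∃ k ∈ I, ∀ ℓ, z ℓ ∈ B k := by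
    intro z hz
    simp only [IsolatesFrequencies] at hz
    push Not at hz
    obtain ⟨k, hk, hcoll⟩ := hz
    refine ⟨k, hk, fun ℓ => ?_⟩
    obtain ⟨l, hl, hlk, heq⟩ := hcoll ℓ
    simp only [B, mem_filter, mem_univ, true_and]
    exact ⟨_, mem_image_of_mem _ (mem_erase.mpr ⟨hlk, hl⟩), by rw [sub_dotProduct, heq, sub_self]⟩
  have hcard := (Nat.card_mono (Set.toFinite _) hbad).trans_eq
    ((Nat.card_eq_fintype_card (α := {z : σ → ι → K // ∃ k ∈ I, ∀ ℓ, z ℓ ∈ B k})).trans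
      (Fintype.card_subtype _))
  calc Nat.card {z : σ → ι → K // ¬ IsolatesFrequencies I z} * Fintype.card K ^ Fintype.card σ
      ≤ (∑ k ∈ I, #(B k) ^ Fintype.card σ) * Fintype.card K ^ Fintype.card σ := by
        gcongr
        exact hcard.trans (card_filter_exists_forall_mem_le I B)
    _ = ∑ k ∈ I, (#(B k) * Fintype.card K) ^ Fintype.card σ := by simp only [sum_mul, mul_pow]
    _ ≤ ∑ k ∈ I, ((#I - 1) * Fintype.card K ^ Fintype.card ι) ^ Fintype.card σ :=
        sum_le_sum fun k hk => Nat.pow_le_pow_left (hB k hk) _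
    _ = _ := by rw [sum_const, smul_eq_mul]

lemma one_sub_mul_le_card_isolatesFrequencies {I : Finset (ι → ℤ)}
    (hI : Set.InjOn (fun k : ι → ℤ => (Int.cast ∘ k : ι → K)) I) {δ : ℝ}
    (hδ : #I * (((#I - 1 : ℕ) : ℝ) / Fintype.card K) ^ Fintype.card σ ≤ δ) :
    (1 - δ) * ((Fintype.card K : ℝ) ^ Fintype.card ι) ^ Fintype.card σ ≤
      Nat.card {z : σ → ι → K // IsolatesFrequencies I z} := by
  classical
  have hsplit : Nat.card {z : σ → ι → K // IsolatesFrequencies I z} +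
      Nat.card {z : σ → ι → K // ¬ IsolatesFrequencies I z} =
        (Fintype.card K ^ Fintype.card ι) ^ Fintype.card σ := by
    simp only [Nat.card_eq_fintype_card, Fintype.card_subtype,
      card_filter_add_card_filter_not, card_univ, Fintype.card_pi, prod_const, card_univ]
  have hq : (0 : ℝ) < Fintype.card K ^ Fintype.card σ := by positivity
  have hbad : (Nat.card {z : σ → ι → K // ¬ IsolatesFrequencies I z} : ℝ) ≤
      δ * ((Fintype.card K : ℝ) ^ Fintype.card ι) ^ Fintype.card σ := by
    rw [← mul_le_mul_iff_of_pos_right hq]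
    calc _ ≤ (#I * ((#I - 1 : ℕ) * Fintype.card K ^ Fintype.card ι) ^ Fintype.card σ : ℝ) := by
          exact_mod_cast card_not_isolatesFrequencies_mul_le hI
      _ = #I * (((#I - 1 : ℕ) : ℝ) / Fintype.card K) ^ Fintype.card σ *
            ((Fintype.card K : ℝ) ^ Fintype.card ι) ^ Fintype.card σ *
              Fintype.card K ^ Fintype.card σ := by
          have : (Fintype.card K : ℝ) ≠ 0 := by positivity
          rw [div_pow]
          field_simp
          ring
      _ ≤ _ := by gcongr
  have hsplitR := congrArg (Nat.cast (R := ℝ)) hsplit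
  push_cast at hsplitR
  linarith

end Counting

lemma injOn_intCast_comp_of_sub_lt {ι : Type*} {M : ℕ} {I : Finset (ι → ℤ)}
    (h : ∀ k ∈ I, ∀ l ∈ I, ∀ i, k i - l i < M) :
    Set.InjOn (fun k : ι → ℤ => (Int.cast ∘ k : ι → ZMod M)) I := by
  intro k hk l hl hkl
  funext i
  have hdvd : (M : ℤ) ∣ l i - k i :=
    (ZMod.intCast_eq_intCast_iff_dvd_sub _ _ _).mp (congrFun hkl i)
  have := Int.eq_zero_of_abs_lt_dvd hdvd (abs_sub_lt_iff.mpr ⟨h l hl k hk i, h k hk l hl i⟩)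
  omega

section Fourier

variable {M : ℕ} [NeZero M]

lemma ZMod.sum_fin_stdAddChar_natCast_mul (b : ZMod M) :
    ∑ j : Fin M, ZMod.stdAddChar (((j : ℕ) : ZMod M) * b) = if b = 0 then (M : ℂ) else 0 := by
  have hbij : Function.Bijective fun j : Fin M => ((j : ℕ) : ZMod M) := by
    refine ⟨fun i j hij => Fin.ext ?_, fun x => ⟨⟨x.val, x.val_lt⟩, ZMod.natCast_zmod_val x⟩⟩
    simpa [ZMod.val_natCast_of_lt i.isLt, ZMod.val_natCast_of_lt j.isLt] using
      congrArg ZMod.val hij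
  rw [Fintype.sum_bijective _ hbij _ (fun x => ZMod.stdAddChar (x * b)) fun _ => rfl,
    AddChar.sum_mulShift b (ZMod.isPrimitive_stdAddChar M), ZMod.card]
  split_ifs <;> simp

lemma multiFourier_apply {d s : ℕ} (z : Fin s → Fin d → ℤ) (I : Finset (Fin d → ℤ))
    (ℓ : Fin s) (j : Fin M) (k : I) :
    multiFourier z (fun _ => M) I ⟨ℓ, j⟩ k =
      ZMod.stdAddChar (((j : ℕ) : ZMod M) * (((k : Fin d → ℤ) ⬝ᵥ z ℓ : ℤ) : ZMod M)) := by
  rw [← Int.cast_natCast, ← Int.cast_mul, ZMod.stdAddChar_coe]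
  simp only [multiFourier, dotProduct]
  push_cast
  ring_nf

theorem rank_multiFourier_of_isolatesFrequencies {d s : ℕ} (z : Fin s → Fin d → ℤ)
    (I : Finset (Fin d → ℤ)) (hz : IsolatesFrequencies I fun ℓ i => (z ℓ i : ZMod M)) :
    (multiFourier z (fun _ => M) I).rank = #I := by
  classical
  have hcast : ∀ ℓ (k : Fin d → ℤ),
      ((k ⬝ᵥ z ℓ : ℤ) : ZMod M) = (Int.cast ∘ k) ⬝ᵥ fun i => (z ℓ i : ZMod M) :=
    fun ℓ k => (Int.castRingHom (ZMod M)).map_dotProduct k (z ℓ)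
  choose ℓ hℓ using hz
  -- row `k` of `B` averages block `ℓ k` against the conjugate character of `k`;
  -- orthogonality of characters of `ZMod M` makes `B` a left inverse
  let B : Matrix I ((_ : Fin s) × Fin M) ℂ := fun k r =>
    if r.1 = ℓ k k.2 then
      ZMod.stdAddChar (-((r.2 : ℕ) : ZMod M) * (((k : Fin d → ℤ) ⬝ᵥ z r.1 : ℤ) : ZMod M)) / M
    else 0
  rw [← Fintype.card_coe I]
  refine rank_eq_card_of_mul_eq_one (B := B) ?_
  ext k k'
  have hentry : (B * multiFourier z (fun _ => M) I) k k' = (∑ j : Fin M,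
      ZMod.stdAddChar (((j : ℕ) : ZMod M) * ((((k' : Fin d → ℤ) ⬝ᵥ z (ℓ k k.2) : ℤ) : ZMod M) -
        (((k : Fin d → ℤ) ⬝ᵥ z (ℓ k k.2) : ℤ) : ZMod M)))) / M := by
    rw [mul_apply, Fintype.sum_sigma, sum_eq_single (ℓ k k.2) (fun ℓ' _ hℓ' => by simp [B, hℓ'])
      (by simp), sum_div]
    refine sum_congr rfl fun j _ => ?_
    simp only [B, if_pos, multiFourier_apply, div_mul_eq_mul_div, ← AddChar.map_add_eq_mul]
    ring_nf
  rw [hentry, ZMod.sum_fin_stdAddChar_natCast_mul, one_apply]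
  by_cases hkk : k = k'
  · subst hkk
    simp [NeZero.ne]
  · have hne := hℓ k k.2 k' k'.2 (fun h => hkk (Subtype.ext h.symm))
    simp [hkk, sub_eq_zero, hcast, hne]

lemma card_isolatesFrequencies_le_card_rank_eq {d s : ℕ} (I : Finset (Fin d → ℤ)) :
    Nat.card {z : Fin s → Fin d → ZMod M // IsolatesFrequencies I z} ≤
      Nat.card {z : Fin s → Fin d → Fin M //
        (multiFourier (fun ℓ i => ((z ℓ i : ℕ) : ℤ)) (fun _ => M) I).rank = #I} := by
  refine Nat.card_le_card_of_injective
    (fun z => ⟨fun ℓ i => ⟨(z.1 ℓ i).val, ZMod.val_lt _⟩, ?_⟩) fun z w hzw => ?_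
  · apply rank_multiFourier_of_isolatesFrequencies
    simpa using z.2
  · ext ℓ i
    exact ZMod.val_injective M
      (congrArg (fun x : Fin M => (x : ℕ)) (congrFun (congrFun (congrArg Subtype.val hzw) ℓ) i))

end Fourier

/-- Corollary 3.3 / Algorithm 1 analysis: let `δ ∈ (0,1)`, `c > 1`,
`T = |I| ≥ 2`, expansion `N_I ≤ c(T-1)`, `s = ⌈(c/(c-1))² (ln T - ln δ)/2⌉`, and let `M` be
the smallest prime `> λ := c(T-1)`. For independent uniform `z_1,…,z_s ∈ {0,…,M-1}^d`, with
probability at least `1 - δ` the multiple rank-1 lattice `Λ(z_1,M,…,z_s,M)` is reconstructing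
for `I` (full column rank `T` of its Fourier matrix), and deterministically
`1 + s(M-1) ≤ s · 2c(T-1) < C_{c,δ} · T · ln T` with
`C_{c,δ} = 2c((c/(c-1))² (1 - log₂ δ)/2 + log₂ e)`. -/
theorem statement10 {d : ℕ} (I : Finset (Fin d → ℤ)) (δ c : ℝ)
    (hδ0 : 0 < δ) (hδ1 : δ < 1) (hc : 1 < c)
    (T : ℕ) (hT : I.card = T) (hT2 : 2 ≤ T)
    (hNI : ∀ k ∈ I, ∀ l ∈ I, ∀ j, ((k j - l j : ℤ) : ℝ) ≤ c * ((T : ℝ) - 1))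
    (s : ℕ) (hs : s = Nat.ceil ((c / (c - 1)) ^ 2 * (Real.log T - Real.log δ) / 2))
    (M : ℕ) (hMp : M.Prime) (hMgt : c * ((T : ℝ) - 1) < M)
    (hMmin : ∀ p : ℕ, p.Prime → c * ((T : ℝ) - 1) < p → M ≤ p) :
    ((1 - δ) * ((M : ℝ) ^ d) ^ s ≤
        (Nat.card {z : Fin s → Fin d → Fin M //
          (multiFourier (fun ℓ i => ((z ℓ i : ℕ) : ℤ)) (fun _ => M) I).rank = T} : ℝ))
    ∧ ((1 : ℝ) + s * ((M : ℝ) - 1)) ≤ s * (2 * c * ((T : ℝ) - 1))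
    ∧ (s : ℝ) * (2 * c * ((T : ℝ) - 1)) <
        (2 * c * ((c / (c - 1)) ^ 2 * (1 - Real.logb 2 δ) / 2 + Real.logb 2 (Real.exp 1)))
          * T * Real.log T := by
  have : Fact M.Prime := ⟨hMp⟩
  have hTR : (2 : ℝ) ≤ T := by exact_mod_cast hT2
  have hA : 0 < (c / (c - 1)) ^ 2 * (log T - log δ) / 2 := by
    have : 0 < log T - log δ := by linarith [log_pos (one_lt_two.trans_le hTR), log_neg hδ0 hδ1]
    have : 0 < c - 1 := by linarith
    positivity
  have hs_ge : (c / (c - 1)) ^ 2 * (log T - log δ) / 2 ≤ s := hs ▸ Nat.le_ceil _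
  have hs_lt : (s : ℝ) < (c / (c - 1)) ^ 2 * (log T - log δ) / 2 + 1 :=
    hs ▸ Nat.ceil_lt_add_one hA.le
  have hs_pos : (1 : ℝ) ≤ s := by exact_mod_cast hs ▸ Nat.ceil_pos.mpr hA
  refine ⟨?_, ?_, mul_two_mul_sub_one_lt_mul_log hc hδ0 hδ1.le hTR hs_lt⟩
  · have hI : Set.InjOn (fun k : Fin d → ℤ => (Int.cast ∘ k : Fin d → ZMod M)) I :=
      injOn_intCast_comp_of_sub_lt fun k hk l hl i => by
        exact_mod_cast (hNI k hk l hl i).trans_lt hMgt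
    have hfail : (#I : ℝ) * (((#I - 1 : ℕ) : ℝ) / Fintype.card (ZMod M)) ^ Fintype.card (Fin s)
        ≤ δ := by
      rw [hT, ZMod.card, Fintype.card_fin, Nat.cast_sub (by omega), Nat.cast_one]
      exact mul_div_pow_le_of_log_sub_log_le hc hδ0 (by linarith) hMgt hs_ge
    calc (1 - δ) * ((M : ℝ) ^ d) ^ s
        ≤ Nat.card {z : Fin s → Fin d → ZMod M // IsolatesFrequencies I z} := by
          simpa using one_sub_mul_le_card_isolatesFrequencies hI hfail
      _ ≤ _ := by
          exact_mod_cast hT ▸ card_isolatesFrequencies_le_card_rank_eq (M := M) (s := s) I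
  · have hM := le_two_mul_of_forall_prime_lt_le (by nlinarith) hMmin
    nlinarith
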